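/- arXiv:1703.01784 — 5 statements merged into one kernel-verified Lean document; each statement's English description precedes it below -/
import Mathlib

section
/- For every k ∈ ℂ with Im k > 0 and every x ∈ ℝ, the function t ↦ e^{itx}/(t² − k²) is Lebesgue integrable on ℝ and (1/(2π)) ∫_ℝ e^{itx}/(t² − k²) dt = i·e^{ik|x|}/(2k). -/
/-!
The kernel `r₀(x) = i e^{ik|x|} / (2k)` decays exponentially, and splitting its Fourier integral at
`0` into two exponential integrals gives `𝓕 r₀ (ξ) = ((2πξ)² - k²)⁻¹`. Since `Im k > 0` this
denominator never vanishes on `ℝ` and grows like `ξ²`, so `𝓕 r₀` is integrable and Fourier inversion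
recovers `r₀ (x)`; the substitution `t = 2πξ` turns the inversion integral into the claimed one.
-/

open Complex MeasureTheory Real Set Filter Asymptotics
open scoped FourierTransform

lemma ofReal_sq_sub_sq_ne_zero {k : ℂ} (hk : k.im ≠ 0) (t : ℝ) : (t : ℂ) ^ 2 - k ^ 2 ≠ 0 := by
  rw [sub_ne_zero]
  intro h
  rcases sq_eq_sq_iff_eq_or_eq_neg.1 h with h | h
  · exact hk (by simp [← h])
  · exact hk (by simpa using congrArg Complex.im h)

lemma integrable_inv_ofReal_sq_sub_sq {k : ℂ} (hk : k.im ≠ 0) :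
    Integrable fun t : ℝ => ((t : ℂ) ^ 2 - k ^ 2)⁻¹ := by
  have hcont : Continuous fun t : ℝ => ((t : ℂ) ^ 2 - k ^ 2)⁻¹ :=
    (by fun_prop : Continuous fun t : ℝ => (t : ℂ) ^ 2 - k ^ 2).inv₀ (ofReal_sq_sub_sq_ne_zero hk)
  refine hcont.locallyIntegrable.integrable_of_isBigO_cocompact (IsBigO.of_bound 2 ?_)
    (integrable_inv_one_add_sq.integrableAtFilter _)
  filter_upwards [tendsto_norm_cocompact_atTop.eventually_ge_atTop (1 + 2 * ‖k‖ ^ 2)] with t ht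
  have hnorm : t ^ 2 - ‖k‖ ^ 2 ≤ ‖(t : ℂ) ^ 2 - k ^ 2‖ := by
    have := norm_sub_norm_le ((t : ℂ) ^ 2) (k ^ 2)
    rwa [norm_pow, norm_pow, Complex.norm_real, Real.norm_eq_abs, sq_abs] at this
  have hlarge : 1 + 2 * ‖k‖ ^ 2 ≤ t ^ 2 := by
    rw [Real.norm_eq_abs] at ht
    nlinarith [sq_abs t, abs_nonneg t]
  rw [norm_inv, norm_inv, Real.norm_of_nonneg (by positivity), ← div_eq_mul_inv, ← inv_div]
  exact inv_anti₀ (by positivity) (by linarith)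

lemma integrable_cexp_mul_abs {c : ℂ} (hc : c.re < 0) :
    Integrable fun y : ℝ => cexp (c * |y|) := by
  rw [← integrableOn_univ, ← Iic_union_Ioi (a := (0 : ℝ)), integrableOn_union]
  refine ⟨(integrableOn_exp_mul_complex_Iic (a := -c) (by simpa using hc) 0).congr_fun
      (fun y hy => ?_) measurableSet_Iic,
    (integrableOn_exp_mul_complex_Ioi hc 0).congr_fun (fun y hy => ?_) measurableSet_Ioi⟩
  · simp [abs_of_nonpos (mem_Iic.1 hy)]
  · simp [abs_of_pos (mem_Ioi.1 hy)]

lemma fourier_cexp_mul_abs {c : ℂ} (hc : c.re < 0) (ξ : ℝ) :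
    𝓕 (fun y : ℝ => cexp (c * |y|)) ξ = -(2 * c) / (c ^ 2 + ((2 * π * ξ : ℝ) : ℂ) ^ 2) := by
  set a : ℂ := ((2 * π * ξ : ℝ) : ℂ) * I with ha
  have hleft : 0 < (-c - a).re := by simpa [ha] using hc
  have hright : (c - a).re < 0 := by simpa [ha] using hc
  have hIic : EqOn (fun y : ℝ => cexp (↑(-2 * π * y * ξ) * I) • cexp (c * |y|))
      (fun y : ℝ => cexp ((-c - a) * y)) (Iic 0) := fun y hy => by
    simp only [smul_eq_mul, ← Complex.exp_add, abs_of_nonpos (mem_Iic.1 hy), ha]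
    push_cast
    ring_nf
  have hIoi : EqOn (fun y : ℝ => cexp (↑(-2 * π * y * ξ) * I) • cexp (c * |y|))
      (fun y : ℝ => cexp ((c - a) * y)) (Ioi 0) := fun y hy => by
    simp only [smul_eq_mul, ← Complex.exp_add, abs_of_pos (mem_Ioi.1 hy), ha]
    push_cast
    ring_nf
  rw [Real.fourier_real_eq_integral_exp_smul, ← intervalIntegral.integral_Iic_add_Ioi
      ((integrableOn_exp_mul_complex_Iic hleft 0).congr_fun hIic.symm measurableSet_Iic)
      ((integrableOn_exp_mul_complex_Ioi hright 0).congr_fun hIoi.symm measurableSet_Ioi),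
    setIntegral_congr_fun measurableSet_Iic hIic, setIntegral_congr_fun measurableSet_Ioi hIoi,
    integral_exp_mul_complex_Iic hleft, integral_exp_mul_complex_Ioi hright]
  have hl : -c - a ≠ 0 := fun h => by simp [h] at hleft
  have hr : c - a ≠ 0 := fun h => by simp [h] at hright
  have hfactor : c ^ 2 + ((2 * π * ξ : ℝ) : ℂ) ^ 2 = -((-c - a) * (c - a)) := by
    rw [ha]
    linear_combination ((2 * π * ξ : ℝ) : ℂ) ^ 2 * I_sq
  simp only [ofReal_zero, mul_zero, Complex.exp_zero, hfactor]
  field_simp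
  ring

lemma fourierInv_comp_two_pi_mul (F : ℝ → ℂ) (x : ℝ) :
    𝓕⁻ (fun ξ : ℝ => F (2 * π * ξ)) x = 1 / (2 * π) * ∫ t : ℝ, cexp (I * t * x) * F t := by
  calc 𝓕⁻ (fun ξ : ℝ => F (2 * π * ξ)) x
      = ∫ ξ : ℝ, cexp (I * ↑(2 * π * ξ) * x) * F (2 * π * ξ) := by
        rw [Real.fourierInv_eq']
        refine integral_congr_ae (ae_of_all _ fun ξ => ?_)
        simp only [RCLike.inner_apply, conj_trivial, smul_eq_mul]
        push_cast
        ring_nf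
    _ = 1 / (2 * π) * ∫ t : ℝ, cexp (I * t * x) * F t := by
        rw [Measure.integral_comp_mul_left (fun t : ℝ => cexp (I * t * x) * F t),
          abs_of_pos (by positivity), Complex.real_smul]
        push_cast
        ring

noncomputable def freeResolventKernel (k : ℂ) (x : ℝ) : ℂ := I * cexp (I * k * |x|) / (2 * k)

lemma continuous_freeResolventKernel (k : ℂ) : Continuous (freeResolventKernel k) := by
  unfold freeResolventKernel
  fun_prop

lemma freeResolventKernel_eq_smul (k : ℂ) :
    freeResolventKernel k = (I / (2 * k)) • fun y : ℝ => cexp (I * k * |y|) := by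
  ext y
  simp only [freeResolventKernel, Pi.smul_apply, smul_eq_mul]
  ring

lemma integrable_freeResolventKernel {k : ℂ} (hk : 0 < k.im) :
    Integrable (freeResolventKernel k) := by
  rw [freeResolventKernel_eq_smul]
  exact (integrable_cexp_mul_abs (by simpa using hk)).smul _

lemma fourier_freeResolventKernel {k : ℂ} (hk : 0 < k.im) (ξ : ℝ) :
    𝓕 (freeResolventKernel k) ξ = (((2 * π * ξ : ℝ) : ℂ) ^ 2 - k ^ 2)⁻¹ := by
  have hk0 : k ≠ 0 := fun h => by simp [h] at hk
  have hden := ofReal_sq_sub_sq_ne_zero hk.ne' (2 * π * ξ)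
  have hlinear : 𝓕 ((I / (2 * k)) • fun y : ℝ => cexp (I * k * |y|)) =
      (I / (2 * k)) • 𝓕 (fun y : ℝ => cexp (I * k * |y|)) :=
    VectorFourier.fourierIntegral_const_smul _ _ _ _ _
  rw [freeResolventKernel_eq_smul, hlinear, Pi.smul_apply,
    fourier_cexp_mul_abs (by simpa using hk), smul_eq_mul,
    show (I * k) ^ 2 + ((2 * π * ξ : ℝ) : ℂ) ^ 2 = ((2 * π * ξ : ℝ) : ℂ) ^ 2 - k ^ 2 by
      rw [mul_pow, I_sq]; ring]
  field_simp
  rw [I_sq, neg_neg]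

/-- For every `k ∈ ℂ` with `Im k > 0` and every `x ∈ ℝ`, the function
`t ↦ e^{itx}/(t² − k²)` is Lebesgue integrable on `ℝ` and
`(1/(2π)) ∫_ℝ e^{itx}/(t² − k²) dt = i e^{ik|x|}/(2k)`. -/
theorem freeResolvent_kernel_secondOrder (k : ℂ) (hk : 0 < k.im) (x : ℝ) :
    Integrable (fun t : ℝ => Complex.exp (Complex.I * t * x) / ((t : ℂ) ^ 2 - k ^ 2)) ∧
    (1 / (2 * (Real.pi : ℂ))) *
        ∫ t : ℝ, Complex.exp (Complex.I * t * x) / ((t : ℂ) ^ 2 - k ^ 2)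
      = Complex.I * Complex.exp (Complex.I * k * |x|) / (2 * k) := by
  have hint := integrable_inv_ofReal_sq_sub_sq hk.ne'
  have hF : 𝓕 (freeResolventKernel k) = fun ξ : ℝ => (((2 * π * ξ : ℝ) : ℂ) ^ 2 - k ^ 2)⁻¹ :=
    funext (fourier_freeResolventKernel hk)
  have hinv := (integrable_freeResolventKernel hk).fourierInv_fourier_eq
    (hF ▸ hint.comp_mul_left' (by positivity)) (continuous_freeResolventKernel k).continuousAt
    (v := x)
  rw [hF, fourierInv_comp_two_pi_mul (fun t : ℝ => ((t : ℂ) ^ 2 - k ^ 2)⁻¹)] at hinv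
  refine ⟨hint.bdd_mul (c := 1) (by fun_prop) (ae_of_all _ fun t => ?_), ?_⟩
  · rw [show I * t * x = ((t * x : ℝ) : ℂ) * I by push_cast; ring]
    exact (norm_exp_ofReal_mul_I _).le
  · simpa only [div_eq_mul_inv, freeResolventKernel] using hinv
end

section
/- Let γ > 0 and let p, q ∈ L¹(ℝ) vanish outside [0,γ]. Then for every k ∈ ℂ and all f₁, f₂ ∈ L²(ℝ): |∫_ℝ e^{−ikx}·( ik·|2p(x)|^{1/2} f₁(x) + |q(x)|^{1/2} f₂(x) ) dx|² ≤ e^{2γ·(Im k)₊} · (2|k|²‖p‖₁ + ‖q‖₁) · (‖f₁‖₂² + ‖f₂‖₂²), where (a)₊ := max(a,0). -/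
open Complex MeasureTheory
open scoped ENNReal

/-! Write the integrand as `i k · g₁ f₁ + g₂ f₂` with `gⱼ(x) = e^{-ikx} |wⱼ(x)|^{1/2}`.
On the support `[0, γ]` of the weights `|e^{-ikx}|² = e^{2x Im k} ≤ e^{2γ (Im k)₊}`, so
`‖gⱼ‖₂² ≤ e^{2γ (Im k)₊} ‖wⱼ‖₁`. Cauchy–Schwarz bounds each of the two integrals, and
`(x + y)² ≤ (a + c)(b + d)` whenever `x² ≤ ab`, `y² ≤ cd` (with `a, b, c, d ≥ 0`) combines them. -/

section Lp

variable {α : Type*} [MeasurableSpace α] {μ : Measure α}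

theorem norm_integral_mul_le_toReal_eLpNorm_mul {𝕜 : Type*} [NormedRing 𝕜] [NormedSpace ℝ 𝕜]
    {p q : ℝ≥0∞} [p.HolderConjugate q] {g f : α → 𝕜} (hg : MemLp g p μ) (hf : MemLp f q μ) :
    ‖∫ x, g x * f x ∂μ‖ ≤ (eLpNorm g p μ).toReal * (eLpNorm f q μ).toReal := by
  have hmul : eLpNorm (fun x => g x * f x) 1 μ ≤ eLpNorm g p μ * eLpNorm f q μ := by
    simpa using eLpNorm_le_eLpNorm_mul_eLpNorm'_of_norm hg.1 hf.1 (· * ·) 1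
      (.of_forall fun x => by simpa using norm_mul_le (g x) (f x))
  calc ‖∫ x, g x * f x ∂μ‖ ≤ ∫ x, ‖g x * f x‖ ∂μ := norm_integral_le_integral_norm _
    _ = (eLpNorm (fun x => g x * f x) 1 μ).toReal := by
        rw [integral_norm_eq_lintegral_enorm (f := fun x => g x * f x) (hg.1.mul hf.1),
          eLpNorm_one_eq_lintegral_enorm]
    _ ≤ (eLpNorm g p μ * eLpNorm f q μ).toReal :=
        ENNReal.toReal_mono (ENNReal.mul_ne_top hg.eLpNorm_ne_top hf.eLpNorm_ne_top) hmul
    _ = _ := ENNReal.toReal_mul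

variable {E : Type*} [NormedAddCommGroup E]

theorem MeasureTheory.MemLp.toReal_eLpNorm_two_sq {f : α → E} (hf : MemLp f 2 μ) :
    (eLpNorm f 2 μ).toReal ^ 2 = ∫ x, ‖f x‖ ^ 2 ∂μ := by
  rw [hf.eLpNorm_eq_integral_rpow_norm two_ne_zero ENNReal.ofNat_ne_top,
    ENNReal.toReal_ofReal (by positivity), ← Real.rpow_natCast, ← Real.rpow_mul (by positivity)]
  norm_num

theorem memLp_two_of_norm_sq_le {g : α → E} {C : α → ℝ} (hg : AEStronglyMeasurable g μ)
    (hC : Integrable C μ) (hgC : ∀ x, ‖g x‖ ^ 2 ≤ C x) : MemLp g 2 μ :=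
  (memLp_two_iff_integrable_sq_norm hg).2 <| hC.mono' (by fun_prop)
    (.of_forall fun x => by simpa using hgC x)

theorem toReal_eLpNorm_two_sq_le {g : α → E} {C : α → ℝ} (hg : AEStronglyMeasurable g μ)
    (hC : Integrable C μ) (hgC : ∀ x, ‖g x‖ ^ 2 ≤ C x) :
    (eLpNorm g 2 μ).toReal ^ 2 ≤ ∫ x, C x ∂μ := by
  have hg₂ := memLp_two_of_norm_sq_le hg hC hgC
  rw [hg₂.toReal_eLpNorm_two_sq]
  exact integral_mono ((memLp_two_iff_integrable_sq_norm hg).1 hg₂) hC hgC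

end Lp

theorem add_sq_le_of_sq_le_mul {x y a b c d : ℝ} (ha : 0 ≤ a) (hb : 0 ≤ b) (hc : 0 ≤ c)
    (hd : 0 ≤ d) (hx : x ^ 2 ≤ a * b) (hy : y ^ 2 ≤ c * d) :
    (x + y) ^ 2 ≤ (a + c) * (b + d) := by
  have hxy : (2 * x * y) ^ 2 ≤ (a * d + c * b) ^ 2 := by
    nlinarith [mul_le_mul hx hy (sq_nonneg y) (mul_nonneg ha hb), sq_nonneg (a * d - c * b)]
  nlinarith [abs_le_of_sq_le_sq' hxy (by positivity)]

noncomputable def phaseSqrtAbs (k : ℂ) (w : ℝ → ℝ) (x : ℝ) : ℂ :=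
  cexp (-(I * k * x)) * (Real.sqrt |w x| : ℂ)

section PhaseSqrtAbs

variable {γ : ℝ} {k : ℂ} {w : ℝ → ℝ}

theorem norm_cexp_neg_I_mul_sq_le {x : ℝ} (hx : x ∈ Set.Icc 0 γ) :
    ‖cexp (-(I * k * x))‖ ^ 2 ≤ Real.exp (2 * γ * max k.im 0) := by
  have hre : (-(I * k * x)).re = k.im * x := by simp
  rw [norm_exp, hre, ← Real.exp_nat_mul, Real.exp_le_exp]
  have : k.im * x ≤ max k.im 0 * γ :=
    (mul_le_mul_of_nonneg_right (le_max_left _ _) hx.1).trans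
      (mul_le_mul_of_nonneg_left hx.2 (le_max_right _ _))
  push_cast
  linarith

theorem norm_phaseSqrtAbs_sq_le (hw : ∀ x ∉ Set.Icc 0 γ, w x = 0) (x : ℝ) :
    ‖phaseSqrtAbs k w x‖ ^ 2 ≤ Real.exp (2 * γ * max k.im 0) * |w x| := by
  by_cases hx : x ∈ Set.Icc 0 γ
  · rw [phaseSqrtAbs, norm_mul, mul_pow, norm_real, Real.norm_eq_abs,
      abs_of_nonneg (Real.sqrt_nonneg _), Real.sq_sqrt (abs_nonneg _)]
    exact mul_le_mul_of_nonneg_right (norm_cexp_neg_I_mul_sq_le hx) (abs_nonneg _)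
  · simp [phaseSqrtAbs, hw x hx]

theorem aestronglyMeasurable_phaseSqrtAbs (hw : Integrable w) :
    AEStronglyMeasurable (phaseSqrtAbs k w) := by
  unfold phaseSqrtAbs
  have := hw.1
  fun_prop

theorem memLp_two_phaseSqrtAbs (hw : Integrable w) (hws : ∀ x ∉ Set.Icc 0 γ, w x = 0) :
    MemLp (phaseSqrtAbs k w) 2 :=
  memLp_two_of_norm_sq_le (aestronglyMeasurable_phaseSqrtAbs hw) (hw.abs.const_mul _)
    (norm_phaseSqrtAbs_sq_le hws)

theorem norm_integral_phaseSqrtAbs_mul_sq_le (hw : Integrable w)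
    (hws : ∀ x ∉ Set.Icc 0 γ, w x = 0) {f : ℝ → ℂ} (hf : MemLp f 2) :
    ‖∫ x, phaseSqrtAbs k w x * f x‖ ^ 2
      ≤ Real.exp (2 * γ * max k.im 0) * (∫ x, |w x|) * (eLpNorm f 2 volume).toReal ^ 2 := by
  have hweight : (eLpNorm (phaseSqrtAbs k w) 2 volume).toReal ^ 2
      ≤ Real.exp (2 * γ * max k.im 0) * ∫ x, |w x| := by
    rw [← integral_const_mul]
    exact toReal_eLpNorm_two_sq_le (aestronglyMeasurable_phaseSqrtAbs hw) (hw.abs.const_mul _)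
      (norm_phaseSqrtAbs_sq_le hws)
  calc ‖∫ x, phaseSqrtAbs k w x * f x‖ ^ 2
      ≤ ((eLpNorm (phaseSqrtAbs k w) 2 volume).toReal * (eLpNorm f 2 volume).toReal) ^ 2 :=
        pow_le_pow_left₀ (norm_nonneg _)
          (norm_integral_mul_le_toReal_eLpNorm_mul (memLp_two_phaseSqrtAbs hw hws) hf) 2
    _ ≤ _ := by
        rw [mul_pow]
        exact mul_le_mul_of_nonneg_right hweight (sq_nonneg _)

theorem norm_integral_cexp_mul_sqrt_abs_add_sq_le {w₁ w₂ : ℝ → ℝ} (hw₁ : Integrable w₁)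
    (hw₁s : ∀ x ∉ Set.Icc 0 γ, w₁ x = 0) (hw₂ : Integrable w₂)
    (hw₂s : ∀ x ∉ Set.Icc 0 γ, w₂ x = 0) (c : ℂ) {f₁ f₂ : ℝ → ℂ} (hf₁ : MemLp f₁ 2)
    (hf₂ : MemLp f₂ 2) :
    ‖∫ x : ℝ, cexp (-(I * k * x)) *
        (c * (Real.sqrt |w₁ x| : ℂ) * f₁ x + (Real.sqrt |w₂ x| : ℂ) * f₂ x)‖ ^ 2
      ≤ Real.exp (2 * γ * max k.im 0) * (‖c‖ ^ 2 * (∫ x, |w₁ x|) + ∫ x, |w₂ x|) *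
          ((eLpNorm f₁ 2 volume).toReal ^ 2 + (eLpNorm f₂ 2 volume).toReal ^ 2) := by
  set I₁ := ∫ x, phaseSqrtAbs k w₁ x * f₁ x
  set I₂ := ∫ x, phaseSqrtAbs k w₂ x * f₂ x
  have hsplit : ∫ x : ℝ, cexp (-(I * k * x)) *
        (c * (Real.sqrt |w₁ x| : ℂ) * f₁ x + (Real.sqrt |w₂ x| : ℂ) * f₂ x) = c * I₁ + I₂ := by
    rw [← integral_const_mul, ← integral_add]
    · congr 1 with x
      simp only [phaseSqrtAbs]
      ring
    · exact ((memLp_two_phaseSqrtAbs hw₁ hw₁s).integrable_mul hf₁).const_mul _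
    · exact (memLp_two_phaseSqrtAbs hw₂ hw₂s).integrable_mul hf₂
  have h₁ : (‖c‖ * ‖I₁‖) ^ 2 ≤ Real.exp (2 * γ * max k.im 0) * (‖c‖ ^ 2 * ∫ x, |w₁ x|)
      * (eLpNorm f₁ 2 volume).toReal ^ 2 := by
    linear_combination ‖c‖ ^ 2 * norm_integral_phaseSqrtAbs_mul_sq_le (k := k) hw₁ hw₁s hf₁
  rw [hsplit]
  calc ‖c * I₁ + I₂‖ ^ 2 ≤ (‖c‖ * ‖I₁‖ + ‖I₂‖) ^ 2 :=
        pow_le_pow_left₀ (norm_nonneg _) ((norm_add_le _ _).trans_eq (by rw [norm_mul])) 2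
    _ ≤ (Real.exp (2 * γ * max k.im 0) * (‖c‖ ^ 2 * ∫ x, |w₁ x|)
          + Real.exp (2 * γ * max k.im 0) * ∫ x, |w₂ x|)
          * ((eLpNorm f₁ 2 volume).toReal ^ 2 + (eLpNorm f₂ 2 volume).toReal ^ 2) :=
        add_sq_le_of_sq_le_mul (by positivity) (by positivity) (by positivity) (by positivity)
          h₁ (norm_integral_phaseSqrtAbs_mul_sq_le hw₂ hw₂s hf₂)
    _ = _ := by ring

end PhaseSqrtAbs

theorem psi_operator_bound_general (γ : ℝ) (p q : ℝ → ℝ)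
    (hp : Integrable p) (hq : Integrable q)
    (hps : ∀ x : ℝ, x ∉ Set.Icc 0 γ → p x = 0)
    (hqs : ∀ x : ℝ, x ∉ Set.Icc 0 γ → q x = 0)
    (k : ℂ) (f₁ f₂ : ℝ → ℂ)
    (hf₁ : MemLp f₁ 2 (volume : Measure ℝ)) (hf₂ : MemLp f₂ 2 (volume : Measure ℝ)) :
    ‖∫ x : ℝ, Complex.exp (-(Complex.I * k * x)) *
        (Complex.I * k * (Real.sqrt |2 * p x| : ℂ) * f₁ x
          + (Real.sqrt |q x| : ℂ) * f₂ x)‖ ^ 2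
      ≤ Real.exp (2 * γ * max k.im 0) *
          (2 * ‖k‖ ^ 2 * (∫ x : ℝ, |p x|) + ∫ x : ℝ, |q x|) *
          ((eLpNorm f₁ 2 volume).toReal ^ 2 + (eLpNorm f₂ 2 volume).toReal ^ 2) := by
  refine (norm_integral_cexp_mul_sqrt_abs_add_sq_le (hp.const_mul 2)
    (fun x hx => by simp [hps x hx]) hq hqs (I * k) hf₁ hf₂).trans_eq ?_
  simp only [abs_mul, abs_two, integral_const_mul, norm_mul, norm_I, one_mul]
  ring

/-- Let `p, q ∈ L¹(ℝ)` vanish outside `[0,γ]`. Then for every `k ∈ ℂ` and `f₁, f₂ ∈ L²(ℝ)`: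
`|∫ e^{−ikx}(ik|2p|^{1/2}f₁ + |q|^{1/2}f₂)dx|² ≤ e^{2γ(Im k)₊}(2|k|²‖p‖₁+‖q‖₁)(‖f₁‖₂²+‖f₂‖₂²)`. -/
theorem psi_operator_bound (γ : ℝ) (hγ : 0 < γ) (p q : ℝ → ℝ)
    (hp : Integrable p) (hq : Integrable q)
    (hps : ∀ x : ℝ, x ∉ Set.Icc 0 γ → p x = 0)
    (hqs : ∀ x : ℝ, x ∉ Set.Icc 0 γ → q x = 0)
    (k : ℂ) (f₁ f₂ : ℝ → ℂ)
    (hf₁ : MemLp f₁ 2 (volume : Measure ℝ)) (hf₂ : MemLp f₂ 2 (volume : Measure ℝ)) :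
    ‖∫ x : ℝ, Complex.exp (-(Complex.I * k * x)) *
        (Complex.I * k * (Real.sqrt |2 * p x| : ℂ) * f₁ x
          + (Real.sqrt |q x| : ℂ) * f₂ x)‖ ^ 2
      ≤ Real.exp (2 * γ * max k.im 0) *
          (2 * ‖k‖ ^ 2 * (∫ x : ℝ, |p x|) + ∫ x : ℝ, |q x|) *
          ((eLpNorm f₁ 2 volume).toReal ^ 2 + (eLpNorm f₂ 2 volume).toReal ^ 2) :=
  psi_operator_bound_general γ p q hp hq hps hqs k f₁ f₂ hf₁ hf₂
end

section
/- Let γ > 0, let h ∈ L¹(0,γ), c ∈ ℝ, and define p : [0,γ] → ℝ by p(x) = c + ∫_0^x h(s) ds (so p is absolutely continuous with p′ = h a.e.), and let q ∈ L¹(0,γ). Then for every ε > 0 there exist C > 0 and R > 0 such that for all k ∈ ℂ with Im k ≥ 0 and |k| ≥ R: |∫_0^γ (2k²p(x) + q(x)) e^{−2ikx} dx − ik·p(γ)·e^{−2ikγ}| ≤ ε·|k|·e^{2γ·Im k} + C·|k|. -/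
/-!
Integrating by parts (via Fubini on the triangle `s ≤ x`, since `p` is only absolutely
continuous) turns `α₂(k) − ik p(γ) e^{−2ikγ}` into `−ikc − ik ∫ h e^{−2ikx} + ∫ q e^{−2ikx}`.
As `|e^{−2ikx}| = e^{2x Im k}`, the `q`-term is `O(e^{2γ Im k})`, which is at most
`(ε/2)|k| e^{2γ Im k}` once `|k|` is large. For the `h`-term, dominated convergence gives
`∫ |h(x)| e^{−t(γ−x)} dx → 0` as `t → ∞`, hence `∫ |h(x)| e^{tx} dx ≤ (ε/2) e^{tγ} + C`
for all `t ≥ 0`.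
-/

open Complex MeasureTheory intervalIntegral Filter
open scoped Real Topology Interval

theorem IntervalIntegrable.ofReal {𝕜 : Type*} [RCLike 𝕜] {f : ℝ → ℝ} {a b : ℝ} {μ : Measure ℝ}
    (hf : IntervalIntegrable f μ a b) : IntervalIntegrable (fun x => (f x : 𝕜)) μ a b :=
  ⟨hf.1.ofReal, hf.2.ofReal⟩

theorem integral_integral_mul_eq_integral_mul_integral {𝕜 : Type*} [RCLike 𝕜] {a b : ℝ}
    (hab : a ≤ b) {h g : ℝ → 𝕜} (hh : IntervalIntegrable h volume a b)
    (hg : IntervalIntegrable g volume a b) :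
    ∫ x in a..b, (∫ s in a..x, h s) * g x = ∫ s in a..b, h s * ∫ x in s..b, g x := by
  rw [intervalIntegrable_iff_integrableOn_Ioc_of_le hab] at hh hg
  set μ := volume.restrict (Set.Ioc a b)
  set F : ℝ × ℝ → 𝕜 := {p | p.2 ≤ p.1}.indicator fun p => g p.1 * h p.2 with hF
  have hFint : Integrable F (μ.prod μ) :=
    (hg.mul_prod hh).indicator (measurableSet_le measurable_snd measurable_fst)
  have hFx (x s : ℝ) : F (x, s) = (Set.Iic x).indicator (fun s => h s * g x) s := by
    simp only [hF, Set.indicator_apply, Set.mem_Iic, mul_comm]; rfl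
  have hFs (x s : ℝ) : F (x, s) = (Set.Ici s).indicator (fun x => h s * g x) x := by
    simp only [hF, Set.indicator_apply, Set.mem_Ici, mul_comm]; rfl
  calc ∫ x in a..b, (∫ s in a..x, h s) * g x
      = ∫ x, ∫ s, F (x, s) ∂μ ∂μ := by
        rw [integral_of_le hab]
        refine setIntegral_congr_fun measurableSet_Ioc fun x hx => ?_
        simp_rw [hFx]
        rw [setIntegral_indicator measurableSet_Iic, Set.Ioc_inter_Iic, min_eq_right hx.2,
          MeasureTheory.integral_mul_const, integral_of_le hx.1.le]
    _ = ∫ s, ∫ x, F (x, s) ∂μ ∂μ := integral_integral_swap hFint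
    _ = ∫ s in a..b, h s * ∫ x in s..b, g x := by
        rw [integral_of_le hab]
        refine setIntegral_congr_fun measurableSet_Ioc fun s hs => ?_
        simp_rw [hFs]
        rw [setIntegral_indicator measurableSet_Ici, MeasureTheory.integral_const_mul,
          integral_of_le hs.2, ← integral_Icc_eq_integral_Ioc]
        congr 3
        ext x
        exact ⟨fun ⟨⟨_, hxb⟩, hsx⟩ => ⟨hsx, hxb⟩,
          fun ⟨hsx, hxb⟩ => ⟨⟨hs.1.trans_le hsx, hxb⟩, hsx⟩⟩

theorem norm_cexp_neg_two_I_mul (k : ℂ) (x : ℝ) :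
    ‖cexp (-(2 * I * k * x))‖ = rexp (2 * k.im * x) := by
  rw [norm_exp]
  congr 1
  simp

theorem integral_cexp_neg_two_I_mul {k : ℂ} (hk : k ≠ 0) (a b : ℝ) :
    ∫ x in a..b, cexp (-(2 * I * k * x))
      = (cexp (-(2 * I * k * b)) - cexp (-(2 * I * k * a))) / (-(2 * I * k)) := by
  simp_rw [show ∀ x : ℂ, -(2 * I * k * x) = -(2 * I * k) * x from fun x => by ring]
  exact integral_exp_mul_complex (by simp [hk])

section ExpWeight

variable {E : Type*} [NormedAddCommGroup E] {f : ℝ → E} {a b : ℝ}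

theorem integral_norm_mul_exp_le (hab : a ≤ b) (hf : IntervalIntegrable f volume a b)
    {t : ℝ} (ht : 0 ≤ t) :
    ∫ x in a..b, ‖f x‖ * rexp (t * x) ≤ (∫ x in a..b, ‖f x‖) * rexp (t * b) := by
  rw [← intervalIntegral.integral_mul_const]
  refine integral_mono_on hab ?_ (hf.norm.mul_const _) fun x hx => ?_
  · exact hf.norm.mul_continuousOn (by fun_prop)
  · gcongr
    exact hx.2

theorem tendsto_integral_norm_mul_exp_neg (hab : a ≤ b) (hf : IntervalIntegrable f volume a b) :
    Tendsto (fun t => ∫ x in a..b, ‖f x‖ * rexp (-(t * (b - x)))) atTop (𝓝 0) := by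
  have hmeas (t : ℝ) : AEStronglyMeasurable (fun x => ‖f x‖ * rexp (-(t * (b - x))))
      (volume.restrict (Ι a b)) :=
    hf.def'.norm.aestronglyMeasurable.mul
      (by fun_prop : Continuous fun x => rexp (-(t * (b - x)))).aestronglyMeasurable
  have hbound : ∀ᶠ t in atTop, ∀ᵐ x, x ∈ Ι a b → ‖‖f x‖ * rexp (-(t * (b - x)))‖ ≤ ‖f x‖ := by
    filter_upwards [eventually_ge_atTop 0] with t ht
    refine Eventually.of_forall fun x hx => ?_
    rw [Set.uIoc_of_le hab] at hx
    rw [norm_mul, norm_norm, Real.norm_of_nonneg (Real.exp_nonneg _)]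
    exact mul_le_of_le_one_right (norm_nonneg _)
      (Real.exp_le_one_iff.2 (by nlinarith [hx.2]))
  have hlim : ∀ᵐ x, x ∈ Ι a b →
      Tendsto (fun t => ‖f x‖ * rexp (-(t * (b - x)))) atTop (𝓝 0) := by
    filter_upwards [Measure.ae_ne volume b] with x hxb hx
    rw [Set.uIoc_of_le hab] at hx
    simpa using (Real.tendsto_exp_neg_atTop_nhds_zero.comp
      (tendsto_id.atTop_mul_const (sub_pos.2 (lt_of_le_of_ne hx.2 hxb)))).const_mul ‖f x‖
  simpa using tendsto_integral_filter_of_dominated_convergence _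
    (Eventually.of_forall hmeas) hbound hf.norm hlim

theorem exists_integral_norm_mul_exp_le (hab : a ≤ b) (hf : IntervalIntegrable f volume a b)
    {ε : ℝ} (hε : 0 < ε) :
    ∃ C, ∀ t, 0 ≤ t → ∫ x in a..b, ‖f x‖ * rexp (t * x) ≤ ε * rexp (t * b) + C := by
  obtain ⟨T, hT⟩ := eventually_atTop.1
    ((tendsto_integral_norm_mul_exp_neg hab hf).eventually (ge_mem_nhds hε))
  have hL1 : 0 ≤ ∫ x in a..b, ‖f x‖ := integral_nonneg hab fun _ _ => norm_nonneg _
  refine ⟨(∫ x in a..b, ‖f x‖) * rexp (T * |b|), fun t ht => ?_⟩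
  rcases le_total T t with hTt | htT
  · have hfactor : ∫ x in a..b, ‖f x‖ * rexp (t * x)
        = rexp (t * b) * ∫ x in a..b, ‖f x‖ * rexp (-(t * (b - x))) := by
      rw [← intervalIntegral.integral_const_mul]
      congr 1 with x
      rw [mul_left_comm, ← Real.exp_add]
      ring_nf
    rw [hfactor, mul_comm ε]
    have := mul_le_mul_of_nonneg_left (hT t hTt) (Real.exp_nonneg (t * b))
    nlinarith [mul_nonneg hL1 (Real.exp_nonneg (T * |b|))]
  · calc ∫ x in a..b, ‖f x‖ * rexp (t * x)
        ≤ (∫ x in a..b, ‖f x‖) * rexp (t * b) := integral_norm_mul_exp_le hab hf ht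
      _ ≤ (∫ x in a..b, ‖f x‖) * rexp (T * |b|) := by
        refine mul_le_mul_of_nonneg_left (Real.exp_le_exp.2 ?_) hL1
        nlinarith [le_abs_self b, abs_nonneg b]
      _ ≤ ε * rexp (t * b) + (∫ x in a..b, ‖f x‖) * rexp (T * |b|) :=
        le_add_of_nonneg_left (by positivity)

end ExpWeight

theorem norm_integral_mul_cexp_le {a b : ℝ} (hab : a ≤ b) (f : ℝ → ℂ) (k : ℂ) :
    ‖∫ x in a..b, f x * cexp (-(2 * I * k * x))‖ ≤ ∫ x in a..b, ‖f x‖ * rexp (2 * k.im * x) := by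
  simpa only [norm_mul, norm_cexp_neg_two_I_mul] using
    norm_integral_le_integral_norm (f := fun x => f x * cexp (-(2 * I * k * x))) hab

theorem integral_primitive_mul_cexp_eq {a b : ℝ} (hab : a ≤ b) {h : ℝ → ℝ}
    (hh : IntervalIntegrable h volume a b) {k : ℂ} (hk : k ≠ 0) :
    ∫ x in a..b, ((∫ s in a..x, h s : ℝ) : ℂ) * cexp (-(2 * I * k * x))
      = (((∫ s in a..b, h s : ℝ) : ℂ) * cexp (-(2 * I * k * b))
          - ∫ x in a..b, (h x : ℂ) * cexp (-(2 * I * k * x))) / (-(2 * I * k)) := by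
  have hhC : IntervalIntegrable (fun s => (h s : ℂ)) volume a b := hh.ofReal
  have hE : Continuous fun x : ℝ => cexp (-(2 * I * k * x)) := by fun_prop
  simp_rw [← intervalIntegral.integral_ofReal]
  rw [integral_integral_mul_eq_integral_mul_integral (h := fun s => (h s : ℂ))
    (g := fun x => cexp (-(2 * I * k * x))) hab hhC (hE.intervalIntegrable _ _)]
  simp_rw [integral_cexp_neg_two_I_mul hk, mul_div_assoc', mul_sub, sub_div]
  rw [intervalIntegral.integral_sub, intervalIntegral.integral_div, intervalIntegral.integral_div,
    intervalIntegral.integral_mul_const]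
  · exact (hhC.mul_const _).div_const _
  · exact (hhC.mul_continuousOn hE.continuousOn).div_const _

theorem alpha2_sub_boundary_eq {γ : ℝ} (hγ : 0 ≤ γ) (c : ℝ) {h q : ℝ → ℝ}
    (hh : IntervalIntegrable h volume 0 γ) (hq : IntervalIntegrable q volume 0 γ)
    {k : ℂ} (hk : k ≠ 0) :
    (∫ x in (0 : ℝ)..γ,
        (2 * k ^ 2 * ((c + ∫ s in (0 : ℝ)..x, h s : ℝ) : ℂ) + (q x : ℂ))
          * cexp (-(2 * I * k * x)))
      - I * k * ((c + ∫ s in (0 : ℝ)..γ, h s : ℝ) : ℂ) * cexp (-(2 * I * k * γ))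
    = -(I * k * c) - I * k * (∫ x in (0 : ℝ)..γ, (h x : ℂ) * cexp (-(2 * I * k * x)))
      + ∫ x in (0 : ℝ)..γ, (q x : ℂ) * cexp (-(2 * I * k * x)) := by
  have hE : Continuous fun x : ℝ => cexp (-(2 * I * k * x)) := by fun_prop
  have hP : ContinuousOn (fun x => ((∫ s in (0 : ℝ)..x, h s : ℝ) : ℂ)) (Set.uIcc 0 γ) :=
    continuous_ofReal.comp_continuousOn (continuousOn_primitive_interval' hh Set.left_mem_uIcc)
  have hsplit (x : ℝ) : (2 * k ^ 2 * ((c + ∫ s in (0 : ℝ)..x, h s : ℝ) : ℂ) + (q x : ℂ))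
        * cexp (-(2 * I * k * x))
      = 2 * k ^ 2 * c * cexp (-(2 * I * k * x))
        + 2 * k ^ 2 * (((∫ s in (0 : ℝ)..x, h s : ℝ) : ℂ) * cexp (-(2 * I * k * x)))
        + (q x : ℂ) * cexp (-(2 * I * k * x)) := by
    push_cast; ring
  have iA : IntervalIntegrable (fun x : ℝ => 2 * k ^ 2 * c * cexp (-(2 * I * k * x))) volume 0 γ :=
    (hE.intervalIntegrable _ _).const_mul _
  have iB : IntervalIntegrable
      (fun x => 2 * k ^ 2 * (((∫ s in (0 : ℝ)..x, h s : ℝ) : ℂ) * cexp (-(2 * I * k * x))))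
      volume 0 γ :=
    ((hP.mul hE.continuousOn).intervalIntegrable).const_mul _
  simp_rw [hsplit]
  rw [intervalIntegral.integral_add, intervalIntegral.integral_add,
    intervalIntegral.integral_const_mul, intervalIntegral.integral_const_mul,
    integral_cexp_neg_two_I_mul hk, integral_primitive_mul_cexp_eq hγ hh hk]
  · push_cast
    rw [mul_zero, neg_zero, Complex.exp_zero]
    generalize cexp (-(2 * I * k * γ)) = Eγ
    generalize ∫ x in (0 : ℝ)..γ, (h x : ℂ) * cexp (-(2 * I * k * x)) = J
    field_simp
    linear_combination k * (c + J - Eγ * (c + ((∫ s in (0 : ℝ)..γ, h s : ℝ) : ℂ))) * I_sq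
  · exact iA
  · exact iB
  · exact iA.add iB
  · exact hq.ofReal.mul_continuousOn hE.continuousOn

/-- Integration-by-parts asymptotics of `α₂(k) = ∫_0^γ (2k²p + q)e^{−2ikx}dx` in the closed
upper half-plane: with `p(x) = c + ∫_0^x h`, for every `ε > 0` there are `C, R > 0` such that
for all `k` with `Im k ≥ 0` and `|k| ≥ R`,
`|α₂(k) − ik p(γ)e^{−2ikγ}| ≤ ε|k|e^{2γ Im k} + C|k|`. -/
theorem alpha2_asymptotics (γ : ℝ) (hγ : 0 < γ) (h : ℝ → ℝ) (c : ℝ)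
    (hh : IntegrableOn h (Set.Ioc 0 γ)) (q : ℝ → ℝ)
    (hq : IntegrableOn q (Set.Ioc 0 γ)) :
    ∀ ε > (0 : ℝ), ∃ C > (0 : ℝ), ∃ R > (0 : ℝ), ∀ k : ℂ, 0 ≤ k.im → R ≤ ‖k‖ →
      ‖(∫ x in (0 : ℝ)..γ,
            (2 * k ^ 2 * ((c + ∫ s in (0 : ℝ)..x, h s : ℝ) : ℂ) + (q x : ℂ))
              * Complex.exp (-(2 * Complex.I * k * x)))
          - Complex.I * k * ((c + ∫ s in (0 : ℝ)..γ, h s : ℝ) : ℂ)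
              * Complex.exp (-(2 * Complex.I * k * γ))‖
        ≤ ε * ‖k‖ * Real.exp (2 * γ * k.im) + C * ‖k‖ := by
  intro ε hε
  rw [← intervalIntegrable_iff_integrableOn_Ioc_of_le hγ.le] at hh hq
  obtain ⟨C, hC⟩ := exists_integral_norm_mul_exp_le hγ.le
    (f := fun x => (h x : ℂ)) hh.ofReal (half_pos hε)
  set N := ∫ x in (0 : ℝ)..γ, ‖(q x : ℂ)‖
  have hN : 0 ≤ N := integral_nonneg hγ.le fun _ _ => norm_nonneg _
  refine ⟨|c| + |C| + 1, by positivity, 2 * N / ε + 1, by positivity, fun k hk hkR => ?_⟩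
  have hk0 : k ≠ 0 := norm_pos_iff.1 ((by positivity : (0 : ℝ) < 2 * N / ε + 1).trans_le hkR)
  have hNk : N ≤ ε / 2 * ‖k‖ := by
    rw [div_add_one hε.ne', div_le_iff₀ hε] at hkR
    linarith
  rw [alpha2_sub_boundary_eq hγ.le c hh hq hk0, show 2 * γ * k.im = 2 * k.im * γ by ring]
  have hJ := (norm_integral_mul_cexp_le hγ.le (fun x => (h x : ℂ)) k).trans
    (hC _ (by positivity))
  have hQ := (norm_integral_mul_cexp_le hγ.le (fun x => (q x : ℂ)) k).trans
    (integral_norm_mul_exp_le hγ.le hq.ofReal (by positivity))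
  have hE := Real.exp_pos (2 * k.im * γ)
  calc _ ≤ ‖k‖ * |c| + ‖k‖ * ‖∫ x in (0 : ℝ)..γ, (h x : ℂ) * cexp (-(2 * I * k * x))‖
        + ‖∫ x in (0 : ℝ)..γ, (q x : ℂ) * cexp (-(2 * I * k * x))‖ := by
        refine (norm_add_le _ _).trans (add_le_add_left ((norm_sub_le _ _).trans_eq ?_) _)
        simp
    _ ≤ ε * ‖k‖ * rexp (2 * k.im * γ) + (|c| + |C| + 1) * ‖k‖ := by
        nlinarith [le_abs_self C, norm_nonneg k, mul_le_mul_of_nonneg_right hNk hE.le,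
          mul_le_mul_of_nonneg_left hJ (norm_nonneg k)]
end

section
/- Let N : (0,∞) → [0,∞) be nondecreasing and suppose N(t) = 0 for all t < ε₀, for some ε₀ > 0. If the function I(r) := (1/r)·∫_0^r (N(t)/t) dt converges to a limit L as r → ∞, then N(r)/r → L as r → ∞. -/
open MeasureTheory Filter intervalIntegral

lemma taub_aux_low (L ε δ η a : ℝ) (hL : 0 ≤ L) (hε : 0 < ε) (hδ : 0 < δ) (hδ1 : δ ≤ 1)
    (hεL : L * δ + δ ≤ ε / 4) (hη : η = ε * δ / 12)
    (ha_lb : δ ≤ a * (1+δ)) (ha_ub : a ≤ δ) :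
    (L - ε) * (a * (1+δ)) < L*δ - η*(2+δ) := by
  rcases le_or_gt L ε with h | h
  · have p : (L-ε) * (a*(1+δ)) ≤ (L-ε) * δ := mul_le_mul_of_nonpos_left ha_lb (by linarith)
    have q : η*(2+δ) < ε * δ := by nlinarith [mul_pos hε hδ]
    nlinarith [p, q]
  · have hA : a*(1+δ) ≤ δ*(1+δ) := mul_le_mul_of_nonneg_right ha_ub (by linarith)
    have p : (L-ε) * (a*(1+δ)) ≤ (L-ε) * (δ*(1+δ)) :=
      mul_le_mul_of_nonneg_left hA (by linarith)
    have hLδ : L * δ ≤ ε/4 := by linarith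
    have hLδ2 : (L*δ)*δ ≤ (ε/4)*δ := mul_le_mul_of_nonneg_right hLδ hδ.le
    nlinarith [p, hLδ2, mul_pos hε hδ, mul_nonneg (mul_nonneg hε.le hδ.le) hδ.le]

lemma taub_aux_up (L ε δ η a : ℝ) (hL : 0 ≤ L) (hε : 0 < ε) (hδ : 0 < δ) (hδ1 : δ ≤ 1)
    (hεL : L * δ + δ ≤ ε / 4) (hη : η = ε * δ / 12)
    (ha_lb : δ ≤ a * (1+δ)) (ha_ub : a ≤ δ) :
    L*δ + η*(2+δ) < (L + ε) * a := by
  have hd : (0:ℝ) < 1 + δ := by linarith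
  have step1 : (L+ε)*δ ≤ (L+ε)*(a*(1+δ)) := mul_le_mul_of_nonneg_left ha_lb (by linarith)
  have hLδ : L * δ ≤ ε/4 := by linarith
  have hLδ2 : (L*δ)*δ ≤ (ε/4)*δ := mul_le_mul_of_nonneg_right hLδ hδ.le
  have m0 : 0 < ε*δ := mul_pos hε hδ
  have m1 : ε*δ*δ ≤ ε*δ := by nlinarith [mul_nonneg m0.le (sub_nonneg.mpr hδ1)]
  have m2 : ε*δ*δ*δ ≤ ε*δ*δ := by
    nlinarith [mul_nonneg (mul_nonneg m0.le hδ.le) (sub_nonneg.mpr hδ1)]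
  have step2 : (L*δ + η*(2+δ))*(1+δ) < (L+ε)*δ := by
    subst hη
    nlinarith [hLδ2, m0, m1, m2]
  have : (L*δ + η*(2+δ))*(1+δ) < ((L+ε)*a)*(1+δ) := by nlinarith [step1, step2]
  exact lt_of_mul_lt_mul_right this hd.le

set_option maxHeartbeats 2000000 in
/-- Tauberian lemma: if `N` is nondecreasing on `(0,∞)`, nonnegative, vanishes near `0`,
and `I(r) = (1/r)∫_0^r N(t)/t dt → L` as `r → ∞`, then `N(r)/r → L` as `r → ∞`. -/
theorem tauberian_counting (N : ℝ → ℝ)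
    (hmono : ∀ s t : ℝ, 0 < s → s ≤ t → N s ≤ N t)
    (hnonneg : ∀ t : ℝ, 0 < t → 0 ≤ N t)
    (ε₀ : ℝ) (hε₀ : 0 < ε₀) (hzero : ∀ t : ℝ, 0 < t → t < ε₀ → N t = 0)
    (L : ℝ)
    (hI : Tendsto (fun r : ℝ => (1 / r) * ∫ t in (0 : ℝ)..r, N t / t)
      atTop (nhds L)) :
    Tendsto (fun r : ℝ => N r / r) atTop (nhds L) := by
  set g : ℝ → ℝ := fun t => N t / t with hg
  set F : ℝ → ℝ := fun r => ∫ t in (0:ℝ)..r, g t with hF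
  have hIntPos : ∀ a b : ℝ, 0 < a → a ≤ b → IntervalIntegrable g volume a b := by
    intro a b ha hab
    have hN : IntervalIntegrable N volume a b := by
      apply MonotoneOn.intervalIntegrable
      intro x hx y hy hxy
      rw [Set.uIcc_of_le hab] at hx
      exact hmono x y (lt_of_lt_of_le ha hx.1) hxy
    have hc : ContinuousOn (fun t : ℝ => t⁻¹) (Set.uIcc a b) := by
      apply ContinuousOn.inv₀ continuousOn_id
      intro x hx
      rw [Set.uIcc_of_le hab] at hx
      exact ne_of_gt (lt_of_lt_of_le ha hx.1)
    simpa [hg, div_eq_mul_inv] using hN.mul_continuousOn hc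
  have hInt0 : ∀ b : ℝ, 0 < b → IntervalIntegrable g volume 0 b := by
    intro b hb
    set c := min b (ε₀/2) with hcdef
    have hc : 0 < c := lt_min hb (by linarith)
    have h1 : IntervalIntegrable g volume 0 c := by
      rw [intervalIntegrable_iff_integrableOn_Ioc_of_le hc.le]
      have heq : Set.EqOn g 0 (Set.Ioc 0 c) := by
        intro t ht
        have ht0 : 0 < t := ht.1
        have : t < ε₀ := lt_of_le_of_lt ht.2 (lt_of_le_of_lt (min_le_right _ _) (by linarith))
        simp [hg, hzero t ht0 this]
      exact (integrableOn_congr_fun heq measurableSet_Ioc).mpr (integrableOn_zero)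
    exact h1.trans (hIntPos c b hc (min_le_left _ _))
  have hdiff : ∀ r s : ℝ, 0 < r → r ≤ s → F s - F r = ∫ t in r..s, g t := by
    intro r s hr hrs
    have := integral_add_adjacent_intervals (hInt0 r hr) (hIntPos r s hr hrs)
    rw [hF]; simp only; linarith [this]
  have hconst : ∀ (C r s : ℝ), 0 < r → r ≤ s →
      (∫ t in r..s, C / t) = C * (Real.log s - Real.log r) := by
    intro C r s hr hrs
    simp only [div_eq_mul_inv]
    rw [intervalIntegral.integral_const_mul, integral_inv, Real.log_div (by linarith) (by linarith)]
    rw [Set.uIcc_of_le hrs]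
    intro h
    exact absurd h.1 (by linarith)
  have hlow : ∀ r s : ℝ, 0 < r → r ≤ s →
      N r * (Real.log s - Real.log r) ≤ F s - F r := by
    intro r s hr hrs
    rw [hdiff r s hr hrs, ← hconst (N r) r s hr hrs]
    apply intervalIntegral.integral_mono_on hrs
    · have hcont : ContinuousOn (fun t : ℝ => N r / t) (Set.uIcc r s) := by
        apply ContinuousOn.div continuousOn_const continuousOn_id
        intro x hx; rw [Set.uIcc_of_le hrs] at hx
        exact ne_of_gt (lt_of_lt_of_le hr hx.1)
      exact hcont.intervalIntegrable
    · exact hIntPos r s hr hrs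
    · intro t ht
      have ht0 : 0 < t := lt_of_lt_of_le hr ht.1
      exact (div_le_div_iff_of_pos_right ht0).mpr (hmono r t hr ht.1)
  have hup : ∀ r s : ℝ, 0 < r → r ≤ s →
      F s - F r ≤ N s * (Real.log s - Real.log r) := by
    intro r s hr hrs
    rw [hdiff r s hr hrs, ← hconst (N s) r s hr hrs]
    apply intervalIntegral.integral_mono_on hrs
    · exact hIntPos r s hr hrs
    · have hcont : ContinuousOn (fun t : ℝ => N s / t) (Set.uIcc r s) := by
        apply ContinuousOn.div continuousOn_const continuousOn_id
        intro x hx; rw [Set.uIcc_of_le hrs] at hx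
        exact ne_of_gt (lt_of_lt_of_le hr hx.1)
      exact hcont.intervalIntegrable
    · intro t ht
      have ht0 : 0 < t := lt_of_lt_of_le hr ht.1
      exact (div_le_div_iff_of_pos_right ht0).mpr (hmono t s ht0 ht.2)
  -- L ≥ 0
  have hFnonneg : ∀ r : ℝ, 0 < r → 0 ≤ F r := by
    intro r hr
    apply intervalIntegral.integral_nonneg hr.le
    intro t ht
    rcases eq_or_lt_of_le ht.1 with h | h
    · simp [hg, ← h]
    · exact div_nonneg (hnonneg t h) (le_of_lt h)
  have hL : 0 ≤ L := by
    apply ge_of_tendsto hI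
    filter_upwards [eventually_gt_atTop (0:ℝ)] with r hr
    exact mul_nonneg (by positivity) (hFnonneg r hr)
  -- epsilon argument
  rw [Metric.tendsto_atTop] at hI ⊢
  intro ε hε
  set δ : ℝ := min 1 (ε / (4 * (L + 1))) with hδdef
  have hδ : 0 < δ := lt_min one_pos (by positivity)
  have hδ1 : δ ≤ 1 := min_le_left _ _
  have hδL : δ * (4 * (L+1)) ≤ ε := by
    have h2 : δ ≤ ε / (4 * (L + 1)) := min_le_right _ _
    rw [le_div_iff₀ (by positivity)] at h2
    linarith
  set η : ℝ := ε * δ / 12 with hηdef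
  have hη : 0 < η := by positivity
  obtain ⟨R₀, hR₀⟩ := hI η hη
  refine ⟨(1+δ) * (max R₀ 1) + ε₀, fun r hrR => ?_⟩
  have hr : 0 < r := by
    have : (0:ℝ) < (1+δ) * (max R₀ 1) + ε₀ := by positivity
    linarith
  have hr1 : r / (1+δ) ≥ max R₀ 1 := by
    rw [ge_iff_le, le_div_iff₀ (by positivity)]
    nlinarith [le_max_right R₀ 1, hε₀]
  have hrlam : 0 < r / (1+δ) := by positivity
  -- bounds from hI at a point
  have key : ∀ x : ℝ, 0 < x → R₀ ≤ x → x * (L - η) ≤ F x ∧ F x ≤ x * (L + η) := by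
    intro x hx hxR
    have hd := hR₀ x hxR
    rw [Real.dist_eq, abs_lt] at hd
    have heq : x * (1/x * F x - L) = F x - x * L := by field_simp
    have e1 : x * (1/x * F x - L) < x * η := (mul_lt_mul_iff_right₀ hx).mpr hd.2
    have e2 : x * (-η) < x * (1/x * F x - L) := (mul_lt_mul_iff_right₀ hx).mpr hd.1
    constructor
    · nlinarith [e1, e2, heq]
    · nlinarith [e1, e2, heq]
  have hxR₀ : R₀ ≤ r / (1+δ) := le_trans (le_max_left _ _) hr1
  have hrR₀ : R₀ ≤ r := le_trans hxR₀ (by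
    rw [div_le_iff₀ (by positivity)]; linarith [mul_pos hr hδ])
  have hlamR₀ : R₀ ≤ (1+δ) * r := le_trans hrR₀ (by nlinarith [mul_pos hr hδ])
  have k1 := key (r/(1+δ)) hrlam hxR₀
  have k2 := key r hr hrR₀
  have k3 := key ((1+δ)*r) (by positivity) hlamR₀
  -- log facts
  set a : ℝ := Real.log (1+δ) with hadef
  have ha_ub : a ≤ δ := by
    have := Real.log_le_sub_one_of_pos (show (0:ℝ) < 1+δ by linarith)
    linarith
  have ha_lb : δ ≤ a * (1+δ) := by
    have h1 : Real.log (1+δ)⁻¹ ≤ (1+δ)⁻¹ - 1 :=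
      Real.log_le_sub_one_of_pos (by positivity)
    rw [Real.log_inv] at h1
    have h2 : (1+δ)⁻¹ = 1/(1+δ) := by ring
    have h3 : -a ≤ 1/(1+δ) - 1 := by rw [← h2]; exact h1
    have h4 : (1/(1+δ)) * (1+δ) = 1 := by field_simp
    nlinarith
  have ha_pos : 0 < a := by nlinarith
  -- upper bound for N r
  have hlog1 : Real.log ((1+δ)*r) - Real.log r = a := by
    rw [Real.log_mul (by positivity) (ne_of_gt hr)]; ring
  have hlog2 : Real.log r - Real.log (r/(1+δ)) = a := by
    rw [Real.log_div (ne_of_gt hr) (by positivity), hadef]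
    ring
  have hUp : N r * a ≤ (1+δ)*r*(L+η) - r*(L-η) := by
    have h1 := hlow r ((1+δ)*r) hr ((le_mul_iff_one_le_left hr).mpr (by linarith))
    rw [hlog1] at h1
    linarith [k3.2, k2.1]
  have hLo : r*(L-η) - (r/(1+δ))*(L+η) ≤ N r * a := by
    have h1 := hup (r/(1+δ)) r hrlam (by
      rw [div_le_iff₀ (by positivity)]; linarith [mul_pos hr hδ])
    rw [hlog2] at h1
    linarith [k1.2, k2.1]
  -- conclude
  have hNr0 : 0 ≤ N r := hnonneg r hr
  rw [Real.dist_eq, abs_lt]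
  have hεL : L * δ + δ ≤ ε / 4 := by linarith [hδL]
  constructor
  · -- L - ε < N r / r
    show -ε < N r / r - L
    have hdivpos : (0:ℝ) < 1 + δ := by linarith
    have h2 : r*(L-η)*(1+δ) - r*(L+η) ≤ N r * (a * (1+δ)) := by
      have hm := mul_le_mul_of_nonneg_right hLo (le_of_lt hdivpos)
      have hexp : (r*(L-η) - (r/(1+δ))*(L+η)) * (1+δ)
          = r*(L-η)*(1+δ) - r*(L+η) := by field_simp
      rw [hexp] at hm
      linarith [hm]
    have harith : (L - ε) * (a * (1+δ)) < L*δ - η*(2+δ) :=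
      taub_aux_low L ε δ η a hL hε hδ hδ1 hεL hηdef ha_lb ha_ub
    have hmain : (L - ε) * r < N r := by
      have hA : 0 < a * (1+δ) := by positivity
      have e1 : r*((L-ε)*(a*(1+δ))) < r*(L*δ - η*(2+δ)) :=
        mul_lt_mul_of_pos_left harith hr
      have e3 : ((L-ε)*r) * (a*(1+δ)) < N r * (a*(1+δ)) := by linarith [e1, h2]
      exact lt_of_mul_lt_mul_right e3 hA.le
    have h3 : L - ε < N r / r := (lt_div_iff₀ hr).mpr hmain
    linarith
  · -- N r / r < L + ε
    show N r / r - L < ε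
    have harith : L*δ + η*(2+δ) < (L + ε) * a :=
      taub_aux_up L ε δ η a hL hε hδ hδ1 hεL hηdef ha_lb ha_ub
    have hmain : N r < (L + ε) * r := by
      have e1 : r*(L*δ + η*(2+δ)) < r*((L+ε)*a) := mul_lt_mul_of_pos_left harith hr
      have e3 : N r * a < ((L+ε)*r) * a := by linarith [e1, hUp]
      exact lt_of_mul_lt_mul_right e3 ha_pos.le
    have h3 : N r / r < L + ε := (div_lt_iff₀ hr).mpr hmain
    linarith
end

section
/- Let p, q : ℝ → ℝ be integrable and compactly supported. Then there exists a constant C > 0 such that for every twice continuously differentiable compactly supported function y : ℝ → ℂ: |−∫_ℝ p(x)|y′(x)|² dx + ∫_ℝ q(x)|y(x)|² dx| ≤ (1/2)·∫_ℝ |y″(x)|² dx + C·∫_ℝ |y(x)|² dx. -/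
/-!
Both quadratic forms are controlled by sup norms: `|∫ p |y′|²| ≤ ‖p‖₁ sup |y′|²` and
`|∫ q |y|²| ≤ ‖q‖₁ sup |y|²`. For a `C¹` compactly
supported `f`, `|f x|² = ∫_{-∞}^x (|f|²)′ ≤ 2 ∫ |f| |f′|`, and after Young's inequality the sup
norms of `y` and `y′` are bounded by `∫ |y|²`, `∫ |y′|²`, `∫ |y″|²`. Integrating by parts,
`∫ |y′|² ≤ ∫ |y″| |y|`, so one more use of Young's inequality eliminates `∫ |y′|²`: for every
`η > 0`, `sup (|y|² + |y′|²) ≤ η ∫ |y″|² + C_η ∫ |y|²`. Choosing `η (‖p‖₁ + ‖q‖₁) ≤ 1/2` gives the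
claim.
-/

open MeasureTheory

section

variable {α : Type*} [MeasurableSpace α] {μ : Measure α}

theorem integral_norm_mul_norm_le {F G : Type*} [NormedAddCommGroup F] [NormedAddCommGroup G]
    {f : α → F} {g : α → G}
    (hf : Integrable (fun x => ‖f x‖ ^ 2) μ) (hg : Integrable (fun x => ‖g x‖ ^ 2) μ)
    {ε : ℝ} (hε : 0 < ε) :
    ∫ x, ‖f x‖ * ‖g x‖ ∂μ ≤ ε * ∫ x, ‖f x‖ ^ 2 ∂μ + (4 * ε)⁻¹ * ∫ x, ‖g x‖ ^ 2 ∂μ := by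
  rw [← integral_const_mul, ← integral_const_mul,
    ← integral_add (hf.const_mul _) (hg.const_mul _)]
  refine integral_mono_of_nonneg (.of_forall fun x => by positivity)
    ((hf.const_mul _).add (hg.const_mul _)) (.of_forall fun x => ?_)
  have hsq : ε * ‖f x‖ ^ 2 + (4 * ε)⁻¹ * ‖g x‖ ^ 2 - ‖f x‖ * ‖g x‖
      = (2 * ε * ‖f x‖ - ‖g x‖) ^ 2 / (4 * ε) := by
    field_simp
    ring
  have : 0 ≤ (2 * ε * ‖f x‖ - ‖g x‖) ^ 2 / (4 * ε) := by positivity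
  linarith

theorem abs_integral_mul_le_of_abs_le {p g : α → ℝ} (hp : Integrable p μ) {M : ℝ} (hg : ∀ x, |g x| ≤ M) :
    |∫ x, p x * g x ∂μ| ≤ (∫ x, |p x| ∂μ) * M := by
  rw [← integral_mul_const, ← Real.norm_eq_abs]
  refine norm_integral_le_of_norm_le (hp.abs.mul_const M) (.of_forall fun x => ?_)
  rw [Real.norm_eq_abs, abs_mul]
  exact mul_le_mul_of_nonneg_left (hg x) (abs_nonneg _)

end

theorem HasCompactSupport.integrable_norm_sq {X F : Type*} [TopologicalSpace X]
    [MeasurableSpace X] [OpensMeasurableSpace X] {μ : Measure X} [IsFiniteMeasureOnCompacts μ]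
    [NormedAddCommGroup F] {f : X → F} (hc : HasCompactSupport f) (hf : Continuous f) :
    Integrable (fun x => ‖f x‖ ^ 2) μ := by
  have hc' : HasCompactSupport (fun x => ‖f x‖ ^ 2) :=
    hc.comp_left (g := fun z : F => ‖z‖ ^ 2) (by simp)
  exact (hf.norm.pow 2).integrable_of_hasCompactSupport hc'

section Interpolation

variable {E : Type*} [NormedAddCommGroup E] [InnerProductSpace ℝ E]

theorem sq_norm_le_two_mul_integral_norm_mul_norm_deriv {f : ℝ → E} (hf : ContDiff ℝ 1 f)
    (hc : HasCompactSupport f) (x : ℝ) :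
    ‖f x‖ ^ 2 ≤ 2 * ∫ u, ‖f u‖ * ‖deriv f u‖ := by
  set g : ℝ → ℝ := fun u => ‖f u‖ ^ 2
  have hg : ContDiff ℝ 1 g := hf.norm_sq ℝ
  have hgc : HasCompactSupport g := hc.comp_left (g := fun z : E => ‖z‖ ^ 2) (by simp)
  have hg' : ∀ u, |deriv g u| ≤ 2 * (‖f u‖ * ‖deriv f u‖) := fun u => by
    rw [((hf.differentiable one_ne_zero u).hasDerivAt.norm_sq).deriv, abs_mul, abs_two]
    exact mul_le_mul_of_nonneg_left (abs_real_inner_le_norm _ _) zero_le_two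
  have hg'_int : Integrable (deriv g) :=
    (hg.continuous_deriv le_rfl).integrable_of_hasCompactSupport hgc.deriv
  have hfg_int : Integrable fun u => ‖f u‖ * ‖deriv f u‖ :=
    (hf.continuous.norm.mul (hf.continuous_deriv le_rfl).norm).integrable_of_hasCompactSupport
      hc.norm.mul_right
  calc ‖f x‖ ^ 2 = ∫ u in Set.Iic x, deriv g u := (hgc.integral_Iic_deriv_eq hg x).symm
    _ ≤ ∫ u in Set.Iic x, |deriv g u| := (le_abs_self _).trans abs_integral_le_integral_abs
    _ ≤ ∫ u, |deriv g u| := setIntegral_le_integral hg'_int.abs (.of_forall fun _ => abs_nonneg _)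
    _ ≤ ∫ u, 2 * (‖f u‖ * ‖deriv f u‖) := integral_mono hg'_int.abs (hfg_int.const_mul 2) hg'
    _ = 2 * ∫ u, ‖f u‖ * ‖deriv f u‖ := integral_const_mul _ _

theorem integral_norm_deriv_sq_le {f : ℝ → E} (hf : ContDiff ℝ 2 f) (hc : HasCompactSupport f) :
    ∫ u, ‖deriv f u‖ ^ 2 ≤ ∫ u, ‖deriv (deriv f) u‖ * ‖f u‖ := by
  have hf₁ : ContDiff ℝ 1 f := hf.of_le one_le_two
  have hf' : ContDiff ℝ 1 (deriv f) := hf.deriv'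
  have cf := hf₁.continuous
  have cf' := hf'.continuous
  have cf'' := hf'.continuous_deriv le_rfl
  have hφ : ∀ u, HasDerivAt (fun t => (inner ℝ (f t) (deriv f t) : ℝ))
      (inner ℝ (f u) (deriv (deriv f) u) + inner ℝ (deriv f u) (deriv f u)) u := fun u =>
    (hf₁.differentiable one_ne_zero u).hasDerivAt.inner ℝ
      (hf'.differentiable one_ne_zero u).hasDerivAt
  have hint₁ : Integrable fun u => (inner ℝ (f u) (deriv (deriv f) u) : ℝ) :=
    (cf.inner cf'').integrable_of_hasCompactSupport
      (hc.comp₂_left hc.deriv.deriv (inner_zero_left _))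
  have hint₂ : Integrable fun u => (inner ℝ (deriv f u) (deriv f u) : ℝ) :=
    (cf'.inner cf').integrable_of_hasCompactSupport
      (hc.deriv.comp₂_left hc.deriv (inner_zero_left _))
  have hparts := integral_eq_zero_of_hasDerivAt_of_integrable hφ (hint₁.add hint₂)
    ((cf.inner cf').integrable_of_hasCompactSupport (hc.comp₂_left hc.deriv (inner_zero_left _)))
  rw [integral_add hint₁ hint₂] at hparts
  have hle : -∫ u, (inner ℝ (f u) (deriv (deriv f) u) : ℝ) ≤ ∫ u, ‖deriv (deriv f) u‖ * ‖f u‖ := by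
    rw [← integral_neg]
    refine integral_mono hint₁.neg
      ((cf''.norm.mul cf.norm).integrable_of_hasCompactSupport hc.norm.mul_left) fun u => ?_
    rw [mul_comm]
    exact (neg_le_abs _).trans (abs_real_inner_le_norm _ _)
  simp only [real_inner_self_eq_norm_sq] at hparts
  linarith

theorem sq_norm_add_sq_norm_deriv_le {y : ℝ → E} (hy : ContDiff ℝ 2 y) (hc : HasCompactSupport y)
    {η : ℝ} (hη : 0 < η) (x : ℝ) :
    ‖y x‖ ^ 2 + ‖deriv y x‖ ^ 2 ≤ η * (∫ u, ‖deriv (deriv y) u‖ ^ 2)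
      + (1 + (1 + 2 / η) ^ 2 / (2 * η)) * ∫ u, ‖y u‖ ^ 2 := by
  have hy₁ : ContDiff ℝ 1 y := hy.of_le one_le_two
  have hy' : ContDiff ℝ 1 (deriv y) := hy.deriv'
  have iA : Integrable fun u => ‖y u‖ ^ 2 := hc.integrable_norm_sq hy₁.continuous
  have iB : Integrable fun u => ‖deriv y u‖ ^ 2 := hc.deriv.integrable_norm_sq hy'.continuous
  have iD : Integrable fun u => ‖deriv (deriv y) u‖ ^ 2 :=
    hc.deriv.deriv.integrable_norm_sq (hy'.continuous_deriv le_rfl)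
  set A := ∫ u, ‖y u‖ ^ 2
  set B := ∫ u, ‖deriv y u‖ ^ 2
  set D := ∫ u, ‖deriv (deriv y) u‖ ^ 2
  set s := 1 + 2 / η
  have hs : 0 < s := by positivity
  have hI : ∫ u, ‖y u‖ * ‖deriv y u‖ ≤ 2⁻¹ * A + (4 * 2⁻¹)⁻¹ * B :=
    integral_norm_mul_norm_le iA iB (by norm_num)
  have hJ : ∫ u, ‖deriv y u‖ * ‖deriv (deriv y) u‖ ≤ η⁻¹ * B + (4 * η⁻¹)⁻¹ * D :=
    integral_norm_mul_norm_le iB iD (inv_pos.2 hη)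
  have hK : B ≤ η / (2 * s) * D + (4 * (η / (2 * s)))⁻¹ * A :=
    (integral_norm_deriv_sq_le hy hc).trans (integral_norm_mul_norm_le iD iA (by positivity))
  have hy_sup : ‖y x‖ ^ 2 ≤ A + B := by
    have := sq_norm_le_two_mul_integral_norm_mul_norm_deriv hy₁ hc x
    linarith
  have hy'_sup : ‖deriv y x‖ ^ 2 ≤ 2 * η⁻¹ * B + η / 2 * D := by
    have := sq_norm_le_two_mul_integral_norm_mul_norm_deriv hy' hc.deriv x
    rw [mul_inv, inv_inv] at hJ
    linarith
  have hsB : s * B ≤ η / 2 * D + s ^ 2 / (2 * η) * A :=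
    calc s * B ≤ s * (η / (2 * s) * D + (4 * (η / (2 * s)))⁻¹ * A) :=
          mul_le_mul_of_nonneg_left hK hs.le
      _ = η / 2 * D + s ^ 2 / (2 * η) * A := by field_simp; ring
  have hsB' : s * B = B + 2 * η⁻¹ * B := by ring
  show _ ≤ η * D + (1 + s ^ 2 / (2 * η)) * A
  linarith

end Interpolation

theorem form_boundedness_general (p q : ℝ → ℝ)
    (hp : Integrable p) (hq : Integrable q) :
    ∃ C > (0 : ℝ), ∀ y : ℝ → ℂ, ContDiff ℝ 2 y → HasCompactSupport y →
      |(-∫ x : ℝ, p x * ‖deriv y x‖ ^ 2) + ∫ x : ℝ, q x * ‖y x‖ ^ 2|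
        ≤ (1 / 2) * (∫ x : ℝ, ‖deriv (deriv y) x‖ ^ 2)
          + C * ∫ x : ℝ, ‖y x‖ ^ 2 := by
  set P := ∫ x, |p x|
  set Q := ∫ x, |q x|
  set S := P + Q
  have hS : 0 ≤ S := by positivity
  set η := (2 * (S + 1))⁻¹
  have hη : 0 < η := by positivity
  have hSη : S * η ≤ 1 / 2 := by
    rw [mul_inv_le_iff₀ (by positivity)]
    linarith
  set K := 1 + (1 + 2 / η) ^ 2 / (2 * η)
  refine ⟨S * K + 1, by positivity, fun y hy hc => ?_⟩
  set A := ∫ x, ‖y x‖ ^ 2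
  set D := ∫ x, ‖deriv (deriv y) x‖ ^ 2
  have hA : 0 ≤ A := integral_nonneg fun _ => by positivity
  have hD : 0 ≤ D := integral_nonneg fun _ => by positivity
  have hsup : ∀ x, ‖y x‖ ^ 2 + ‖deriv y x‖ ^ 2 ≤ η * D + K * A :=
    sq_norm_add_sq_norm_deriv_le hy hc hη
  have hp' : |∫ x, p x * ‖deriv y x‖ ^ 2| ≤ P * (η * D + K * A) :=
    abs_integral_mul_le_of_abs_le hp fun x => by
      rw [abs_of_nonneg (by positivity)]
      exact (le_add_of_nonneg_left (by positivity)).trans (hsup x)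
  have hq' : |∫ x, q x * ‖y x‖ ^ 2| ≤ Q * (η * D + K * A) :=
    abs_integral_mul_le_of_abs_le hq fun x => by
      rw [abs_of_nonneg (by positivity)]
      exact (le_add_of_nonneg_right (by positivity)).trans (hsup x)
  calc _ ≤ |∫ x, p x * ‖deriv y x‖ ^ 2| + |∫ x, q x * ‖y x‖ ^ 2| :=
        (abs_add_le _ _).trans_eq (by rw [abs_neg])
    _ ≤ P * (η * D + K * A) + Q * (η * D + K * A) := add_le_add hp' hq'
    _ = S * η * D + S * K * A := by ring
    _ ≤ 1 / 2 * D + (S * K + 1) * A := by linarith [mul_le_mul_of_nonneg_right hSη hD]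

/-- Form-boundedness of the perturbation `V = 2∂p∂ + q` relative to `H₀ = d⁴/dx⁴`:
for integrable compactly supported `p, q` there is `C > 0` such that for every `C²`
compactly supported `y : ℝ → ℂ`,
`|−∫ p|y′|² + ∫ q|y|²| ≤ (1/2)∫|y″|² + C∫|y|²`. -/
theorem form_boundedness (p q : ℝ → ℝ)
    (hp : Integrable p) (hq : Integrable q)
    (hpc : HasCompactSupport p) (hqc : HasCompactSupport q) :
    ∃ C > (0 : ℝ), ∀ y : ℝ → ℂ, ContDiff ℝ 2 y → HasCompactSupport y →
      |(-∫ x : ℝ, p x * ‖deriv y x‖ ^ 2) + ∫ x : ℝ, q x * ‖y x‖ ^ 2|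
        ≤ (1 / 2) * (∫ x : ℝ, ‖deriv (deriv y) x‖ ^ 2)
          + C * ∫ x : ℝ, ‖y x‖ ^ 2 :=
  form_boundedness_general p q hp hq
end
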